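/- arXiv:1811.06617 — 4 statements merged into one kernel-verified Lean document; each statement's English description precedes it below -/
import Mathlib

section
/- Let φ: ℝ → ℝ be Borel measurable with 0 ≤ φ(s) ≤ π for all s, let r > 0 and α ∈ [0, π/2), and suppose that ∫_{−∞}^{0} φ(s)/(r² + 2rs·sin α + s²) ds = ∫_{0}^{∞} φ(s)/(r² + 2rs·sin α + s²) ds (both integrals being finite). Then ∫_{−∞}^{∞} φ(s)/(r² + 2rs·sin α + s²) ds ≤ π²/r. -/
/-!
Completing the square, `r² + 2rs sin α + s² = (s + r sin α)² + (r cos α)²`, so the kernel has an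
arctangent primitive and `∫₀^∞ ds / (r² + 2rs sin α + s²) = (π/2 - α) / (r cos α)`. Jordan's
inequality `π/2 - α ≤ (π/2) cos α` bounds this by `π / (2r)`. The balancing hypothesis makes the
whole integral twice the integral over `(0, ∞)`, which is at most `2 · π · π / (2r)` since `φ ≤ π`.
-/

open MeasureTheory Real Set Filter

lemma sq_add_two_mul_mul_sin_add_sq (r s α : ℝ) :
    r ^ 2 + 2 * r * s * sin α + s ^ 2 = (s + r * sin α) ^ 2 + (r * cos α) ^ 2 := by
  linear_combination (-r ^ 2) * sin_sq_add_cos_sq α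

lemma integrable_inv_add_sq_add_sq (a : ℝ) {b : ℝ} (hb : b ≠ 0) :
    Integrable fun s : ℝ => ((s + a) ^ 2 + b ^ 2)⁻¹ := by
  convert ((integrable_inv_one_add_sq.comp_div hb).comp_add_right a).const_mul (b ^ 2)⁻¹
    using 2 with s
  field_simp
  ring

lemma hasDerivAt_inv_mul_arctan_add_div (a : ℝ) {b : ℝ} (hb : b ≠ 0) (x : ℝ) :
    HasDerivAt (fun x => b⁻¹ * arctan ((x + a) / b)) ((x + a) ^ 2 + b ^ 2)⁻¹ x := by
  refine ((((hasDerivAt_id x).add_const a).div_const b).arctan.const_mul b⁻¹).congr_deriv ?_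
  simp only [id]
  field_simp
  ring

lemma integral_Ioi_inv_add_sq_add_sq (a : ℝ) {b : ℝ} (hb : 0 < b) :
    ∫ s in Ioi 0, ((s + a) ^ 2 + b ^ 2)⁻¹ = (π / 2 - arctan (a / b)) / b := by
  have hlim : Tendsto (fun x => b⁻¹ * arctan ((x + a) / b)) atTop (nhds (b⁻¹ * (π / 2))) :=
    ((tendsto_nhds_of_tendsto_nhdsWithin tendsto_arctan_atTop).comp
      ((tendsto_atTop_add_const_right _ a tendsto_id).atTop_div_const hb)).const_mul _
  rw [integral_Ioi_of_hasDerivAt_of_tendsto'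
    (fun x _ => hasDerivAt_inv_mul_arctan_add_div a hb.ne' x)
    (integrable_inv_add_sq_add_sq a hb.ne').integrableOn hlim, zero_add]
  field_simp

lemma integrable_inv_sq_add_two_mul_mul_sin_add_sq {r α : ℝ} (hr : 0 < r)
    (hα : α ∈ Ioo (-(π / 2)) (π / 2)) :
    Integrable fun s : ℝ => (r ^ 2 + 2 * r * s * sin α + s ^ 2)⁻¹ := by
  simp_rw [sq_add_two_mul_mul_sin_add_sq]
  exact integrable_inv_add_sq_add_sq _ (mul_pos hr (cos_pos_of_mem_Ioo hα)).ne'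

lemma integral_Ioi_inv_sq_add_two_mul_mul_sin_add_sq {r α : ℝ} (hr : 0 < r)
    (hα : α ∈ Ioo (-(π / 2)) (π / 2)) :
    ∫ s in Ioi 0, (r ^ 2 + 2 * r * s * sin α + s ^ 2)⁻¹ = (π / 2 - α) / (r * cos α) := by
  have hcos := cos_pos_of_mem_Ioo hα
  simp_rw [sq_add_two_mul_mul_sin_add_sq]
  rw [integral_Ioi_inv_add_sq_add_sq _ (mul_pos hr hcos), mul_div_mul_left _ _ hr.ne',
    ← tan_eq_sin_div_cos, arctan_tan hα.1 hα.2]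

lemma pi_div_two_sub_le_pi_div_two_mul_cos {α : ℝ} (h₀ : 0 ≤ α) (h₁ : α ≤ π / 2) :
    π / 2 - α ≤ π / 2 * cos α := by
  have hjordan := mul_le_mul_of_nonneg_left (one_sub_mul_le_cos h₀ h₁) (half_pos pi_pos).le
  have hlhs : π / 2 * (1 - 2 / π * α) = π / 2 - α := by field_simp
  linarith

lemma integral_Ioi_inv_sq_add_two_mul_mul_sin_add_sq_le {r α : ℝ} (hr : 0 < r)
    (hα : α ∈ Ico 0 (π / 2)) :
    ∫ s in Ioi 0, (r ^ 2 + 2 * r * s * sin α + s ^ 2)⁻¹ ≤ π / (2 * r) := by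
  have hα' : α ∈ Ioo (-(π / 2)) (π / 2) := ⟨by linarith [pi_pos, hα.1], hα.2⟩
  have hcos := cos_pos_of_mem_Ioo hα'
  rw [integral_Ioi_inv_sq_add_two_mul_mul_sin_add_sq hr hα', div_le_div_iff₀ (by positivity)
    (by positivity)]
  nlinarith [pi_div_two_sub_le_pi_div_two_mul_cos hα.1 hα.2.le]

theorem stmt_7_general (φ : ℝ → ℝ)
    (hb : ∀ s : ℝ, 0 ≤ φ s ∧ φ s ≤ Real.pi)
    (r α : ℝ) (hr : 0 < r) (hα : α ∈ Set.Ico 0 (Real.pi / 2))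
    (hi1 : MeasureTheory.IntegrableOn
      (fun s : ℝ => φ s / (r^2 + 2 * r * s * Real.sin α + s^2)) (Set.Iio 0))
    (hi2 : MeasureTheory.IntegrableOn
      (fun s : ℝ => φ s / (r^2 + 2 * r * s * Real.sin α + s^2)) (Set.Ioi 0))
    (heq : (∫ s in Set.Iio (0 : ℝ), φ s / (r^2 + 2 * r * s * Real.sin α + s^2))
      = ∫ s in Set.Ioi (0 : ℝ), φ s / (r^2 + 2 * r * s * Real.sin α + s^2)) :
    ∫ s : ℝ, φ s / (r^2 + 2 * r * s * Real.sin α + s^2) ≤ Real.pi^2 / r := by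
  have hα' : α ∈ Ioo (-(π / 2)) (π / 2) := ⟨by linarith [pi_pos, hα.1], hα.2⟩
  have hkernel := integrable_inv_sq_add_two_mul_mul_sin_add_sq hr hα'
  have hsplit :=
    intervalIntegral.integral_Iic_add_Ioi ((integrableOn_Iic_iff_integrableOn_Iio).2 hi1) hi2
  rw [integral_Iic_eq_integral_Iio, heq] at hsplit
  have hright : ∫ s in Ioi 0, φ s / (r ^ 2 + 2 * r * s * sin α + s ^ 2)
      ≤ π * ∫ s in Ioi 0, (r ^ 2 + 2 * r * s * sin α + s ^ 2)⁻¹ := by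
    rw [← integral_const_mul]
    refine setIntegral_mono_on hi2 (hkernel.const_mul π).integrableOn measurableSet_Ioi
      fun s _ => ?_
    rw [div_eq_mul_inv, sq_add_two_mul_mul_sin_add_sq]
    exact mul_le_mul_of_nonneg_right (hb s).2 (by positivity)
  have hkernel_le := integral_Ioi_inv_sq_add_two_mul_mul_sin_add_sq_le hr hα
  calc ∫ s, φ s / (r ^ 2 + 2 * r * s * sin α + s ^ 2)
      ≤ 2 * (π * (π / (2 * r))) := by
        rw [← hsplit]
        linarith [mul_le_mul_of_nonneg_left hkernel_le pi_pos.le]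
    _ = π ^ 2 / r := by field_simp

theorem stmt_7 (φ : ℝ → ℝ) (hm : Measurable φ)
    (hb : ∀ s : ℝ, 0 ≤ φ s ∧ φ s ≤ Real.pi)
    (r α : ℝ) (hr : 0 < r) (hα : α ∈ Set.Ico 0 (Real.pi / 2))
    (hi1 : MeasureTheory.IntegrableOn
      (fun s : ℝ => φ s / (r^2 + 2 * r * s * Real.sin α + s^2)) (Set.Iio 0))
    (hi2 : MeasureTheory.IntegrableOn
      (fun s : ℝ => φ s / (r^2 + 2 * r * s * Real.sin α + s^2)) (Set.Ioi 0))
    (heq : (∫ s in Set.Iio (0 : ℝ), φ s / (r^2 + 2 * r * s * Real.sin α + s^2))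
      = ∫ s in Set.Ioi (0 : ℝ), φ s / (r^2 + 2 * r * s * Real.sin α + s^2)) :
    ∫ s : ℝ, φ s / (r^2 + 2 * r * s * Real.sin α + s^2) ≤ Real.pi^2 / r :=
  stmt_7_general φ hb r α hr hα hi1 hi2 heq
end

section
/- For all complex a and b with Re a > 0 and Re b > 0, the improper integral ∫_0^∞ (e^{−at} − e^{−bt})/t dt converges and equals Log(b/a), where Log is the principal branch of the complex logarithm. -/
/-!
On the segment `γ u = a + u (b - a)`, which stays in the right half-plane,
`(e^{-at} - e^{-bt}) / t = (b - a) ∫₀¹ e^{-γ(u) t} du`.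
Since `|e^{-γ(u) t}| ≤ e^{-min(Re a, Re b) t}`, the double integral converges absolutely, so Fubini
gives integrability and lets us integrate in `t` first: the inner integral is `1 / γ u`, and
`∫₀¹ γ'(u) / γ(u) du = Log b - Log a = Log (b / a)`.
-/

open MeasureTheory Set Filter

lemma Complex.log_div_of_re_pos {a b : ℂ} (ha : 0 < a.re) (hb : 0 < b.re) :
    Complex.log (b / a) = Complex.log b - Complex.log a := by
  have harg_a := Complex.abs_arg_lt_pi_div_two_iff.2 (Or.inl ha)
  have harg_b := Complex.abs_arg_lt_pi_div_two_iff.2 (Or.inl hb)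
  have ha_pi : a.arg ≠ Real.pi := by
    intro h; rw [h, abs_of_pos Real.pi_pos] at harg_a; linarith [Real.pi_pos]
  have ha0 : a ≠ 0 := by rintro rfl; simp at ha
  have hb0 : b ≠ 0 := by rintro rfl; simp at hb
  rw [div_eq_mul_inv, Complex.log_mul_eq_add_log_iff hb0 (inv_ne_zero ha0) |>.2,
    Complex.log_inv a ha_pi, sub_eq_add_neg]
  -- both arguments lie in `(-π/2, π/2)`, so `arg b - arg a` stays in `(-π, π)`
  rw [Complex.arg_inv, if_neg ha_pi]
  constructor <;> linarith [abs_lt.1 harg_a, abs_lt.1 harg_b, Real.pi_pos]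

lemma min_re_le_re_add_mul_sub (a b : ℂ) {u : ℝ} (hu : u ∈ Icc (0 : ℝ) 1) :
    min a.re b.re ≤ (a + u * (b - a)).re := by
  have hre : (a + u * (b - a)).re = (1 - u) * a.re + u * b.re := by simp; ring
  rw [hre]
  nlinarith [min_le_left a.re b.re, min_le_right a.re b.re, hu.1, hu.2]

lemma norm_exp_neg_mul_ofReal_le {z : ℂ} {m t : ℝ} (hm : m ≤ z.re) (ht : 0 ≤ t) :
    ‖Complex.exp (-z * t)‖ ≤ Real.exp (-m * t) := by
  rw [Complex.norm_exp, Real.exp_le_exp]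
  simpa using mul_le_mul_of_nonneg_right hm ht

lemma integral_exp_neg_mul_Ioi_zero {c : ℂ} (hc : 0 < c.re) :
    ∫ t : ℝ in Ioi 0, Complex.exp (-c * t) = c⁻¹ := by
  rw [integral_exp_mul_complex_Ioi (a := -c) (by simpa using hc) 0, neg_div_neg_eq]
  simp

lemma exp_sub_exp_div_eq_integral (a b : ℂ) {t : ℝ} (ht : t ≠ 0) :
    (Complex.exp (-a * t) - Complex.exp (-b * t)) / t
      = (b - a) * ∫ u in (0 : ℝ)..1, Complex.exp (-(a + u * (b - a)) * t) := by
  rcases eq_or_ne b a with rfl | hba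
  · simp
  have hc : -((b - a) * t) ≠ 0 := by simp [sub_ne_zero.2 hba, ht]
  have hsplit : ∀ u : ℝ, Complex.exp (-(a + u * (b - a)) * t)
      = Complex.exp (-a * t) * Complex.exp (-((b - a) * t) * u) := by
    intro u; rw [← Complex.exp_add]; ring_nf
  simp_rw [hsplit, intervalIntegral.integral_const_mul, integral_exp_mul_complex hc]
  rw [show -b * t = -a * t + -((b - a) * t) * ((1 : ℝ) : ℂ) by push_cast; ring, Complex.exp_add]
  have ht' : (t : ℂ) ≠ 0 := by exact_mod_cast ht
  field_simp
  simp only [Complex.ofReal_zero, mul_zero, neg_zero, Complex.exp_zero]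
  ring

lemma integrable_prod_exp_neg_add_mul_sub_mul {a b : ℂ} (ha : 0 < a.re) (hb : 0 < b.re) :
    Integrable (fun p : ℝ × ℝ => Complex.exp (-(a + p.2 * (b - a)) * p.1))
      ((volume.restrict (Ioi 0)).prod (volume.restrict (Ioc 0 1))) := by
  have hm : 0 < min a.re b.re := lt_min ha hb
  have hdom : Integrable (fun p : ℝ × ℝ => Real.exp (-min a.re b.re * p.1) * 1)
      ((volume.restrict (Ioi 0)).prod (volume.restrict (Ioc 0 1))) :=
    (exp_neg_integrableOn_Ioi 0 hm).mul_prod (integrable_const 1)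
  refine hdom.mono' (by fun_prop) ?_
  rw [Measure.prod_restrict, ae_restrict_iff' (measurableSet_Ioi.prod measurableSet_Ioc)]
  refine Eventually.of_forall fun p ⟨ht, hu⟩ => ?_
  rw [mul_one]
  exact norm_exp_neg_mul_ofReal_le (min_re_le_re_add_mul_sub a b (Ioc_subset_Icc_self hu))
    (le_of_lt ht)

lemma integral_inv_add_mul_sub {a b : ℂ}
    (h : ∀ u ∈ Icc (0 : ℝ) 1, a + u * (b - a) ∈ Complex.slitPlane) :
    ∫ u in (0 : ℝ)..1, (b - a) * (a + u * (b - a))⁻¹ = Complex.log b - Complex.log a := by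
  have hderiv : ∀ u ∈ uIcc (0 : ℝ) 1, HasDerivAt (fun u : ℝ => Complex.log (a + u * (b - a)))
      ((b - a) * (a + u * (b - a))⁻¹) u := by
    intro u hu
    rw [uIcc_of_le zero_le_one] at hu
    have hlin : HasDerivAt (fun u : ℝ => a + u * (b - a)) (b - a) u := by
      simpa using ((hasDerivAt_id u).ofReal_comp.mul_const (b - a)).const_add a
    simpa [div_eq_mul_inv, mul_comm] using hlin.clog_real (h u hu)
  have hcont : ContinuousOn (fun u : ℝ => (b - a) * (a + u * (b - a))⁻¹) (uIcc 0 1) := by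
    refine continuousOn_const.mul (ContinuousOn.inv₀ (by fun_prop) fun u hu => ?_)
    rw [uIcc_of_le zero_le_one] at hu
    exact Complex.slitPlane_ne_zero (h u hu)
  rw [intervalIntegral.integral_eq_sub_of_hasDerivAt hderiv hcont.intervalIntegrable]
  simp

theorem stmt_9 (a b : ℂ) (ha : 0 < a.re) (hb : 0 < b.re) :
    MeasureTheory.IntegrableOn
      (fun t : ℝ => (Complex.exp (-a * t) - Complex.exp (-b * t)) / (t : ℂ)) (Set.Ioi 0) ∧
    (∫ t in Set.Ioi (0 : ℝ), (Complex.exp (-a * t) - Complex.exp (-b * t)) / (t : ℂ))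
      = Complex.log (b / a) := by
  have hre : ∀ u ∈ Icc (0 : ℝ) 1, 0 < (a + u * (b - a)).re := fun u hu =>
    (lt_min ha hb).trans_le (min_re_le_re_add_mul_sub a b hu)
  have hK := integrable_prod_exp_neg_add_mul_sub_mul ha hb
  have hrep : EqOn (fun t : ℝ => (Complex.exp (-a * t) - Complex.exp (-b * t)) / (t : ℂ))
      (fun t => (b - a) * ∫ u in Ioc (0 : ℝ) 1, Complex.exp (-(a + u * (b - a)) * t)) (Ioi 0) :=
    fun t ht => by
      dsimp only
      rw [exp_sub_exp_div_eq_integral a b (ne_of_gt ht),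
        intervalIntegral.integral_of_le zero_le_one]
  refine ⟨IntegrableOn.congr_fun (hK.integral_prod_left.const_mul (b - a)) hrep.symm
    measurableSet_Ioi, ?_⟩
  calc _ = (b - a) * ∫ t in Ioi (0 : ℝ), ∫ u in Ioc (0 : ℝ) 1,
        Complex.exp (-(a + u * (b - a)) * t) := by
        rw [setIntegral_congr_fun measurableSet_Ioi hrep, integral_const_mul]
    _ = (b - a) * ∫ u in Ioc (0 : ℝ) 1, (a + u * (b - a))⁻¹ := by
        rw [integral_integral_swap hK]
        congr 1
        exact setIntegral_congr_fun measurableSet_Ioc fun u hu =>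
          integral_exp_neg_mul_Ioi_zero (hre u (Ioc_subset_Icc_self hu))
    _ = Complex.log b - Complex.log a := by
        rw [← intervalIntegral.integral_of_le zero_le_one, ← intervalIntegral.integral_const_mul]
        exact integral_inv_add_mul_sub fun u hu => Complex.mem_slitPlane_iff.2 (Or.inl (hre u hu))
    _ = Complex.log (b / a) := (Complex.log_div_of_re_pos ha hb).symm
end

section
/- If f: H → ℂ is a Rogers function (holomorphic on the right half-plane H with Re(f(ξ)/ξ) ≥ 0 on H) and f is not identically zero, then f has no zeroes in H, and ξ ↦ ξ²/f(ξ) is again a Rogers function. -/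
/-! By the open mapping theorem, `f ξ / ξ` is either constant or maps the right half-plane `H`
onto an open subset of the closed right half-plane, hence into the open one; either way it has
no zero unless it vanishes identically. Then `(ξ² / f ξ) / ξ = (f ξ / ξ)⁻¹`, and inversion
preserves the sign of the real part. -/

theorem Complex.ne_zero_of_re_nonneg_of_isPreconnected {U : Set ℂ} {g : ℂ → ℂ}
    (hg : DifferentiableOn ℂ g U) (hUo : IsOpen U) (hUc : IsPreconnected U)
    (hre : ∀ z ∈ U, 0 ≤ (g z).re) (hnz : ∃ z ∈ U, g z ≠ 0) :
    ∀ z ∈ U, g z ≠ 0 := by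
  rcases (hg.analyticOnNhd hUo).is_constant_or_isOpen hUc with ⟨w, hw⟩ | hopen
  · obtain ⟨z₁, hz₁, hg₁⟩ := hnz
    intro z hz
    rwa [hw z hz, ← hw z₁ hz₁]
  · have himage : g '' U ⊆ {w : ℂ | 0 < w.re} := by
      rw [← interior_setOfPred_le_re]
      refine (hopen U subset_rfl hUo).subset_interior_iff.mpr ?_
      rintro _ ⟨z, hz, rfl⟩
      exact hre z hz
    intro z hz hgz
    simpa [hgz] using himage ⟨z, hz, rfl⟩

theorem Complex.re_inv_nonneg {z : ℂ} (hz : 0 ≤ z.re) : 0 ≤ z⁻¹.re := by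
  rw [Complex.inv_re]
  exact div_nonneg hz (Complex.normSq_nonneg z)

theorem stmt_16 (f : ℂ → ℂ)
    (hf : DifferentiableOn ℂ f {ξ : ℂ | 0 < ξ.re})
    (hr : ∀ ξ ∈ {ξ : ℂ | 0 < ξ.re}, 0 ≤ (f ξ / ξ).re)
    (hnz : ∃ ξ ∈ {ξ : ℂ | 0 < ξ.re}, f ξ ≠ 0) :
    (∀ ξ ∈ {ξ : ℂ | 0 < ξ.re}, f ξ ≠ 0) ∧
    DifferentiableOn ℂ (fun ξ : ℂ => ξ^2 / f ξ) {ξ : ℂ | 0 < ξ.re} ∧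
    (∀ ξ ∈ {ξ : ℂ | 0 < ξ.re}, 0 ≤ ((ξ^2 / f ξ) / ξ).re) := by
  set H : Set ℂ := {ξ : ℂ | 0 < ξ.re}
  have hH : IsOpen H := isOpen_lt continuous_const Complex.continuous_re
  have hξ : ∀ ξ ∈ H, ξ ≠ 0 := fun ξ hξ h => by simp [H, h] at hξ
  have hquot : ∀ ξ ∈ H, f ξ / ξ ≠ 0 :=
    Complex.ne_zero_of_re_nonneg_of_isPreconnected (hf.div differentiableOn_id hξ) hH
      (convex_halfSpace_re_gt 0).isPreconnected hr
      (hnz.imp fun ξ ⟨hξH, hfξ⟩ => ⟨hξH, div_ne_zero hfξ (hξ ξ hξH)⟩)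
  have hf0 : ∀ ξ ∈ H, f ξ ≠ 0 := fun ξ hξH hfξ => hquot ξ hξH (by simp [hfξ])
  refine ⟨hf0, (differentiableOn_id.pow 2).div hf hf0, fun ξ hξH => ?_⟩
  have hinv : (ξ ^ 2 / f ξ) / ξ = (f ξ / ξ)⁻¹ := by
    field_simp [hξ ξ hξH, hf0 ξ hξH]
  rw [hinv]
  exact Complex.re_inv_nonneg (hr ξ hξH)
end

section
/- Let f be holomorphic on the right half-plane H with Re(f(ξ)/ξ) ≥ 0 on H (a Rogers function), and let g be holomorphic on ℂ ∖ (−∞, 0] with g((0,∞)) ⊆ [0,∞) and Im g(ξ) ≥ 0 whenever Im ξ > 0 (a complete Bernstein function). Assume f is non-degenerate, i.e. f(H) ⊆ ℂ ∖ (−∞, 0]. Then the composition ξ ↦ g(f(ξ)) is a Rogers function on H. -/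
/-!
It suffices to write `g w = a + b * w` with `a, b ≥ 0` for every `w` in the slit plane, since then
`Re (g (f ξ) / ξ) = a * Re ξ⁻¹ + b * Re (f ξ / ξ) ≥ 0`; for `Im w > 0` this means
`0 ≤ arg (g w) ≤ arg w`. Unless `g` is constant, the open mapping theorem upgrades the hypotheses on
`g` to `Im g > 0` on the upper half-plane and `g > 0` on `(0, ∞)`. Then `arg (g (exp w)) - Im w` is
the logarithm of the modulus of a holomorphic function on the strip `0 ≤ Im w ≤ π - ε`; it is
bounded by `π`, and by `0` and `ε` on the two boundary lines, so Phragmén–Lindelöf bounds it by `ε`.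
The lower half-plane follows from the reflection `g (conj z) = conj (g z)`, which holds by the
identity theorem.
-/

open Complex Set Filter Topology
open scoped ComplexConjugate Real

lemma isPreconnected_slitPlane : IsPreconnected slitPlane :=
  (starConvex_one_slitPlane.isPathConnected one_mem_slitPlane).isConnected.isPreconnected

lemma conj_mem_slitPlane {z : ℂ} (hz : z ∈ slitPlane) : conj z ∈ slitPlane := by
  simpa [mem_slitPlane_iff] using hz

lemma exp_mem_slitPlane_of_im_mem_Ico {w : ℂ} (h0 : 0 ≤ w.im) (hπ : w.im < π) :
    exp w ∈ slitPlane ∧ 0 ≤ (exp w).im := by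
  rw [mem_slitPlane_iff, exp_re, exp_im]
  refine ⟨?_, mul_nonneg (Real.exp_pos _).le (Real.sin_nonneg_of_nonneg_of_le_pi h0 hπ.le)⟩
  rcases h0.eq_or_lt with h | h
  · exact Or.inl (by simp [← h, Real.exp_pos])
  · exact Or.inr (mul_pos (Real.exp_pos _) (Real.sin_pos_of_pos_of_lt_pi h hπ)).ne'

lemma exists_nonneg_add_mul_of_arg_le {u z : ℂ} (hz : 0 < z.im) (hu : 0 ≤ u.im)
    (harg : arg u ≤ arg z) : ∃ a b : ℝ, 0 ≤ a ∧ 0 ≤ b ∧ u = a + b * z := by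
  have hz0 : z ≠ 0 := fun h => by simp [h] at hz
  -- `a` and `b` are the coordinates of `u` in the real basis `1, z`
  have hcross : 0 ≤ u.re * z.im - u.im * z.re := by
    rcases eq_or_ne u 0 with rfl | hu0
    · simp
    have hsin : u.re * z.im - u.im * z.re = ‖u‖ * ‖z‖ * Real.sin (arg z - arg u) := by
      rw [Real.sin_sub, sin_arg, sin_arg, cos_arg hu0, cos_arg hz0]
      field_simp
    rw [hsin]
    exact mul_nonneg (by positivity) (Real.sin_nonneg_of_nonneg_of_le_pi (by linarith)
      (by linarith [arg_le_pi z, arg_nonneg_iff.2 hu]))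
  refine ⟨(u.re * z.im - u.im * z.re) / z.im, u.im / z.im, div_nonneg hcross hz.le,
    div_nonneg hu hz.le, Complex.ext ?_ ?_⟩
  · rw [add_re, ofReal_re, re_ofReal_mul]
    field_simp
    ring
  · rw [add_im, ofReal_im, im_ofReal_mul, zero_add]
    field_simp

section

variable {g : ℂ → ℂ}

lemma map_conj_of_im_eq_zero (hg : DifferentiableOn ℂ g slitPlane)
    (hreal : ∀ x : ℝ, 0 < x → (g x).im = 0) {z : ℂ} (hz : z ∈ slitPlane) :
    g (conj z) = conj (g z) := by
  have hrefl : AnalyticOnNhd ℂ (conj ∘ g ∘ conj) slitPlane := by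
    refine DifferentiableOn.analyticOnNhd (fun w hw => ?_) isOpen_slitPlane
    exact (differentiableAt_conj_conj_iff.2 <| hg.differentiableAt <|
      isOpen_slitPlane.mem_nhds (conj_mem_slitPlane hw)).differentiableWithinAt
  have hfreq : ∃ᶠ w in 𝓝[≠] (1 : ℂ), (conj ∘ g ∘ conj) w = g w := by
    have hlim : Tendsto ((↑) : ℝ → ℂ) (𝓝[>] 1) (𝓝[≠] 1) :=
      tendsto_nhdsWithin_of_tendsto_nhds_of_eventually_within _
        ((continuous_ofReal.tendsto' 1 1 ofReal_one).mono_left nhdsWithin_le_nhds)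
        (eventually_nhdsWithin_of_forall fun x hx => by simpa using (ne_of_gt hx))
    refine hlim.frequently (Eventually.frequently ?_)
    filter_upwards [self_mem_nhdsWithin] with x hx
    simp [conj_eq_iff_im.2 (hreal x (one_pos.trans hx))]
  have := hrefl.eqOn_of_preconnected_of_frequently_eq (hg.analyticOnNhd isOpen_slitPlane)
    isPreconnected_slitPlane one_mem_slitPlane hfreq hz
  simpa using congrArg conj this

lemma im_pos_of_isOpen_image (hopen : IsOpen (g '' {z | 0 < z.im}))
    (hgim : ∀ z : ℂ, 0 < z.im → 0 ≤ (g z).im) {z : ℂ} (hz : 0 < z.im) : 0 < (g z).im := by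
  have himage : g '' {z | 0 < z.im} ⊆ interior {w : ℂ | 0 ≤ w.im} :=
    interior_maximal (image_subset_iff.2 fun w hw => hgim w hw) hopen
  rw [interior_setOfPred_le_im] at himage
  exact himage (mem_image_of_mem g hz)

lemma re_pos_of_isOpen_image (hopen : IsOpen (g '' slitPlane))
    (hgpos : ∀ x : ℝ, 0 < x → (g x).im = 0 ∧ 0 ≤ (g x).re)
    (hupper : ∀ z : ℂ, 0 < z.im → 0 < (g z).im)
    (hconj : ∀ z ∈ slitPlane, g (conj z) = conj (g z)) {x : ℝ} (hx : 0 < x) :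
    0 < (g x).re := by
  refine (hgpos x hx).2.lt_of_ne fun hre => ?_
  have hzero : g x = 0 := Complex.ext hre.symm (hgpos x hx).1
  obtain ⟨t, ⟨z, hz, hzt⟩, ht⟩ : ∃ t : ℝ, (t : ℂ) ∈ g '' slitPlane ∧ t < 0 := by
    have hlim : Tendsto ((↑) : ℝ → ℂ) (𝓝[<] 0) (𝓝 (g x)) := by
      rw [hzero]
      exact (continuous_ofReal.tendsto' 0 0 ofReal_zero).mono_left nhdsWithin_le_nhds
    exact ((hlim.eventually (hopen.mem_nhds (mem_image_of_mem g (ofReal_mem_slitPlane.2 hx)))).and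
      self_mem_nhdsWithin).exists
  rcases lt_trichotomy z.im 0 with him | him | him
  · have := hupper (conj z) (by simpa using him)
    rw [hconj z hz, hzt] at this
    simp at this
  · have hre : 0 < z.re := (mem_slitPlane_iff.1 hz).resolve_right (not_not.2 him)
    have := (hgpos z.re hre).2
    rw [show (z.re : ℂ) = z from Complex.ext rfl (by simp [him]), hzt, ofReal_re] at this
    linarith
  · have := hupper z him
    rw [hzt] at this
    simp at this

section upperHalfPlane

variable (hpos : ∀ x : ℝ, 0 < x → 0 < (g x).re ∧ (g x).im = 0)
  (hupper : ∀ z : ℂ, 0 < z.im → 0 < (g z).im)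
include hpos hupper

lemma apply_mem_slitPlane_of_im_nonneg {z : ℂ} (hz : z ∈ slitPlane) (him : 0 ≤ z.im) :
    g z ∈ slitPlane := by
  rcases him.eq_or_lt with h | h
  · have hre : 0 < z.re := (mem_slitPlane_iff.1 hz).resolve_right (not_not.2 h.symm)
    rw [show z = (z.re : ℂ) from Complex.ext rfl (by simp [← h])]
    exact Or.inl (hpos z.re hre).1
  · exact Or.inr (hupper z h).ne'

lemma arg_comp_exp_sub_im_le (hg : DifferentiableOn ℂ g slitPlane) {b : ℝ} (hb : 0 < b)
    (hbπ : b < π) {w : ℂ} (hw : 0 ≤ w.im) (hwb : w.im ≤ b) :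
    arg (g (exp w)) - w.im ≤ π - b := by
  set Φ : ℂ → ℂ := fun w => exp (-I * (log (g (exp w)) - w))
  have hnorm : ∀ w, ‖Φ w‖ = Real.exp (arg (g (exp w)) - w.im) := fun w => by
    simp [Φ, norm_exp, log_im]
  have hdiff : ∀ w : ℂ, 0 ≤ w.im → w.im ≤ b → DifferentiableAt ℂ Φ w := fun w h0 hb' => by
    obtain ⟨hexp, hexp_im⟩ := exp_mem_slitPlane_of_im_mem_Ico h0 (hb'.trans_lt hbπ)
    have hg' := hg.differentiableAt (isOpen_slitPlane.mem_nhds hexp)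
    have hlog := differentiableAt_log (apply_mem_slitPlane_of_im_nonneg hpos hupper hexp hexp_im)
    fun_prop
  have hΦ : DiffContOnCl ℂ Φ (im ⁻¹' Ioo 0 b) := by
    refine DifferentiableOn.diffContOnCl fun w hw => ?_
    rw [closure_preimage_im, closure_Ioo hb.ne] at hw
    exact (hdiff w hw.1 hw.2).differentiableWithinAt
  have hbounded : ∃ c < π / (b - 0), ∃ B, Φ =O[comap (_root_.abs ∘ re) atTop ⊓ 𝓟 (im ⁻¹' Ioo 0 b)]
      fun w => Real.exp (B * Real.exp (c * |w.re|)) := by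
    refine ⟨0, by simpa using div_pos Real.pi_pos hb, π, Asymptotics.IsBigO.of_bound 1 ?_⟩
    filter_upwards [mem_inf_of_right (mem_principal_self _)] with w hw
    simpa [hnorm] using (arg_le_pi _).trans (le_add_of_nonneg_right hw.1.le)
  have hle_zero : ∀ w : ℂ, w.im = 0 → ‖Φ w‖ ≤ Real.exp (π - b) := fun w h => by
    have hexp : exp w = (Real.exp w.re : ℂ) := by
      rw [ofReal_exp]
      exact congrArg exp (Complex.ext rfl (by simp [h]))
    have harg : arg (g (exp w)) = 0 := by
      rw [hexp]
      exact arg_eq_zero_iff.2 ⟨(hpos _ (Real.exp_pos _)).1.le, (hpos _ (Real.exp_pos _)).2⟩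
    rw [hnorm, harg, h, Real.exp_le_exp]
    linarith
  have hle_b : ∀ w : ℂ, w.im = b → ‖Φ w‖ ≤ Real.exp (π - b) := fun w h => by
    rw [hnorm, h, Real.exp_le_exp]
    linarith [arg_le_pi (g (exp w))]
  have := PhragmenLindelof.horizontal_strip hΦ hbounded hle_zero hle_b hw hwb
  rwa [hnorm, Real.exp_le_exp] at this

lemma arg_le_arg_of_im_pos (hg : DifferentiableOn ℂ g slitPlane) {z : ℂ} (hz : 0 < z.im) :
    arg (g z) ≤ arg z := by
  have hz0 : z ≠ 0 := fun h => by simp [h] at hz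
  have harg_pos : 0 < arg z :=
    (arg_nonneg_iff.2 hz.le).lt_of_ne fun h => by simp [(arg_eq_zero_iff.1 h.symm).2] at hz
  have harg_lt : arg z < π := arg_lt_pi_iff.2 (Or.inr hz.ne')
  refine le_of_forall_pos_le_add fun δ hδ => ?_
  set ε := min δ ((π - arg z) / 2)
  have hε : 0 < ε := lt_min hδ (by linarith)
  have hεπ : ε < π - arg z := (min_le_right _ _).trans_lt (by linarith)
  have := arg_comp_exp_sub_im_le hpos hupper hg (b := π - ε) (by linarith) (by linarith)
    (w := log z) (by rw [log_im]; exact harg_pos.le) (by rw [log_im]; linarith)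
  rw [exp_log hz0, log_im] at this
  linarith [min_le_left δ ((π - arg z) / 2)]

end upperHalfPlane

section completeBernstein

variable (hg : DifferentiableOn ℂ g slitPlane)
  (hgpos : ∀ x : ℝ, 0 < x → (g x).im = 0 ∧ 0 ≤ (g x).re)
  (hgim : ∀ z : ℂ, 0 < z.im → 0 ≤ (g z).im)
include hg hgpos hgim

lemma exists_nonneg_add_mul_of_isOpen_image (hopen : ∀ s ⊆ slitPlane, IsOpen s → IsOpen (g '' s))
    {w : ℂ} (hw : w ∈ slitPlane) : ∃ a b : ℝ, 0 ≤ a ∧ 0 ≤ b ∧ g w = a + b * w := by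
  have hconj : ∀ z ∈ slitPlane, g (conj z) = conj (g z) := fun z hz =>
    map_conj_of_im_eq_zero hg (fun x hx => (hgpos x hx).1) hz
  have hupper : ∀ z : ℂ, 0 < z.im → 0 < (g z).im := fun z =>
    im_pos_of_isOpen_image (hopen _ (fun z hz => Or.inr (ne_of_gt hz))
      (isOpen_lt continuous_const continuous_im)) hgim
  have hpos : ∀ x : ℝ, 0 < x → 0 < (g x).re ∧ (g x).im = 0 := fun x hx =>
    ⟨re_pos_of_isOpen_image (hopen _ subset_rfl isOpen_slitPlane) hgpos hupper hconj hx,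
      (hgpos x hx).1⟩
  have hcone : ∀ z : ℂ, 0 < z.im → ∃ a b : ℝ, 0 ≤ a ∧ 0 ≤ b ∧ g z = a + b * z := fun z hz =>
    exists_nonneg_add_mul_of_arg_le hz (hupper z hz).le (arg_le_arg_of_im_pos hpos hupper hg hz)
  rcases lt_trichotomy w.im 0 with him | him | him
  · obtain ⟨a, b, ha, hb, hab⟩ := hcone (conj w) (by simpa using him)
    exact ⟨a, b, ha, hb, by simpa [hconj w hw] using congrArg conj hab⟩
  · have hre : 0 < w.re := (mem_slitPlane_iff.1 hw).resolve_right (not_not.2 him)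
    have hw_eq : w = (w.re : ℂ) := Complex.ext rfl (by simp [him])
    rw [hw_eq]
    refine ⟨(g w.re).re, 0, (hgpos w.re hre).2, le_rfl, ?_⟩
    apply Complex.ext <;> simp [(hgpos w.re hre).1]
  · exact hcone w him

lemma exists_nonneg_add_mul {w : ℂ} (hw : w ∈ slitPlane) :
    ∃ a b : ℝ, 0 ≤ a ∧ 0 ≤ b ∧ g w = a + b * w := by
  rcases (hg.analyticOnNhd isOpen_slitPlane).is_constant_or_isOpen isPreconnected_slitPlane
    with ⟨c, hc⟩ | hopen
  · have hg1 := hgpos 1 one_pos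
    push_cast at hg1
    refine ⟨(g 1).re, 0, hg1.2, le_rfl, ?_⟩
    rw [hc w hw, ← hc 1 one_mem_slitPlane]
    apply Complex.ext <;> simp [hg1.1]
  · exact exists_nonneg_add_mul_of_isOpen_image hg hgpos hgim hopen hw

end completeBernstein

end

theorem stmt_18 (f g : ℂ → ℂ)
    (hf : DifferentiableOn ℂ f {ξ : ℂ | 0 < ξ.re})
    (hfr : ∀ ξ ∈ {ξ : ℂ | 0 < ξ.re}, 0 ≤ (f ξ / ξ).re)
    (hg : DifferentiableOn ℂ g Complex.slitPlane)
    (hgpos : ∀ x : ℝ, 0 < x → (g (x : ℂ)).im = 0 ∧ 0 ≤ (g (x : ℂ)).re)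
    (hgim : ∀ ξ : ℂ, 0 < ξ.im → 0 ≤ (g ξ).im)
    (hnd : ∀ ξ ∈ {ξ : ℂ | 0 < ξ.re}, f ξ ∈ Complex.slitPlane) :
    DifferentiableOn ℂ (fun ξ : ℂ => g (f ξ)) {ξ : ℂ | 0 < ξ.re} ∧
    ∀ ξ ∈ {ξ : ℂ | 0 < ξ.re}, 0 ≤ (g (f ξ) / ξ).re := by
  refine ⟨hg.comp hf hnd, fun ξ hξ => ?_⟩
  obtain ⟨a, b, ha, hb, hab⟩ := exists_nonneg_add_mul hg hgpos hgim (hnd ξ hξ)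
  have hinv : 0 < (ξ⁻¹).re := by
    rw [inv_re]
    exact div_pos hξ (normSq_pos.2 fun h => by simp [h] at hξ)
  have hre : (g (f ξ) / ξ).re = a * (ξ⁻¹).re + b * (f ξ / ξ).re := by
    rw [hab, add_div, div_eq_mul_inv, mul_div_assoc]
    simp
  rw [hre]
  exact add_nonneg (mul_nonneg ha hinv.le) (mul_nonneg hb (hfr ξ hξ))
end
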